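/- arXiv:1507.00972 — 2 statements merged into one kernel-verified Lean document; each statement's English description precedes it below -/
import Mathlib

section
/- On an n-plectic manifold (M,ϖ), the Hamiltonian vector fields form a Lie subalgebra of vector fields: if X_α and X_β are Hamiltonian vector fields of Hamiltonian (n−1)-forms α, β, then [X_α, X_β] is the Hamiltonian vector field of the (n−1)-form −ι_{X_α}ι_{X_β}ϖ. -/
/-- On an `n`-plectic manifold `(M, ϖ)` (ϖ a closed nondegenerate
`(n+1)`-form, modelled as `Form (m+2)` with `m = n - 1`), the Hamiltonian vector fields form
a Lie subalgebra: if `X_α, X_β` are Hamiltonian vector fields of Hamiltonian `(n-1)`-forms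
`α, β` (i.e. `dα = -ι_{X_α}ϖ`, `dβ = -ι_{X_β}ϖ`), then `⁅X_α, X_β⁆` is the Hamiltonian
vector field of the `(n-1)`-form `-ι_{X_α}ι_{X_β}ϖ`, i.e.
`ι_{⁅X_α,X_β⁆} ϖ = -d(-ι_{X_α}ι_{X_β}ϖ)`. -/
theorem hamiltonian_vector_fields_subalgebra
    (Vec : Type) [LieRing Vec]
    (Form : ℕ → Type) [∀ n, AddCommGroup (Form n)] [∀ n, Module ℝ (Form n)]
    (d : ∀ n, Form n → Form (n + 1))
    (ι : ∀ n, Vec → Form (n + 1) → Form n)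
    (lie : ∀ n, Vec → Form n → Form n)
    -- Cartan calculus axioms
    (d_d : ∀ (n) (α : Form n), d _ (d _ α) = 0)
    (d_neg : ∀ (n) (α : Form n), d _ (-α) = - d _ α)
    (ι_neg : ∀ (n) (X : Vec) (α : Form (n + 1)), ι _ X (-α) = - ι _ X α)
    (cartan : ∀ (n) (X : Vec) (α : Form (n + 1)), lie _ X α = d _ (ι _ X α) + ι _ X (d _ α))
    (lie_d : ∀ (n) (X : Vec) (α : Form n), lie _ X (d _ α) = d _ (lie _ X α))
    (ι_lie : ∀ (n) (X Y : Vec) (α : Form (n + 1)),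
      ι _ ⁅X, Y⁆ α = lie _ X (ι _ Y α) - ι _ Y (lie _ X α))
    -- the n-plectic structure
    (m : ℕ) (ϖ : Form (m + 2))
    (hclosed : d _ ϖ = 0)
    (hnondeg : ∀ X : Vec, ι _ X ϖ = 0 → X = 0)
    -- Hamiltonian forms α, β with Hamiltonian vector fields Xα, Xβ
    (α β : Form m) (Xα Xβ : Vec)
    (hα : d _ α = - ι _ Xα ϖ) (hβ : d _ β = - ι _ Xβ ϖ) :
    ι _ ⁅Xα, Xβ⁆ ϖ = - d _ (- ι _ Xα (ι _ Xβ ϖ)) := by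
  have hι0 : ∀ (n : ℕ) (X : Vec), ι n X (0 : Form (n + 1)) = 0 := by
    intro n X
    have h := ι_neg n X 0
    rw [neg_zero] at h
    have h2 : (2 : ℝ) • ι n X (0 : Form (n + 1)) = 0 := by
      rw [two_smul]; nth_rewrite 1 [h]; exact neg_add_cancel _
    simpa using (smul_eq_zero.mp h2).resolve_left (by norm_num)
  have hιβ : ι _ Xβ ϖ = - d _ β := by rw [hβ, neg_neg]
  have hια : ι _ Xα ϖ = - d _ α := by rw [hα, neg_neg]
  have hlie : lie _ Xα ϖ = 0 := by
    rw [cartan, hclosed, hια, d_neg, d_d, neg_zero, hι0, add_zero]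
  rw [ι_lie, hlie, hι0, cartan, hιβ, d_neg, d_d, neg_zero, hι0]
  simp [d_neg, ι_neg]
end

section
/- On a 2-plectic manifold (M,ϖ), the bracket μ₂(α₁,α₂) := −ι_{X_{α₁}}ι_{X_{α₂}}ϖ on Hamiltonian 1-forms fails to satisfy the Jacobi identity by an exact term: μ₂(μ₂(α₁,α₂),α₃) + μ₂(μ₂(α₃,α₁),α₂) + μ₂(μ₂(α₂,α₃),α₁) = −d(ι_{X_{α₁}}ι_{X_{α₂}}ι_{X_{α₃}}ϖ). -/
/-- On a 2-plectic manifold `(M, ϖ)` (ϖ a closed nondegenerate 3-form),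
the bracket `μ₂(α₁,α₂) := -ι_{X_{α₁}}ι_{X_{α₂}}ϖ` on Hamiltonian 1-forms fails to satisfy
the Jacobi identity by an exact term:
`μ₂(μ₂(α₁,α₂),α₃) + μ₂(μ₂(α₃,α₁),α₂) + μ₂(μ₂(α₂,α₃),α₁) = -d(ι_{X_{α₁}}ι_{X_{α₂}}ι_{X_{α₃}}ϖ)`,
using that `μ₂(αᵢ,αⱼ)` is again Hamiltonian with Hamiltonian vector field `⁅X_{αᵢ},X_{αⱼ}⁆`. -/
theorem two_plectic_jacobiator_exact
    (Vec : Type) [LieRing Vec]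
    (Form : ℕ → Type) [∀ n, AddCommGroup (Form n)] [∀ n, Module ℝ (Form n)]
    (d : ∀ n, Form n → Form (n + 1))
    (ι : ∀ n, Vec → Form (n + 1) → Form n)
    (lie : ∀ n, Vec → Form n → Form n)
    -- Cartan calculus axioms
    (d_d : ∀ (n) (α : Form n), d _ (d _ α) = 0)
    (d_neg : ∀ (n) (α : Form n), d _ (-α) = - d _ α)
    (ι_neg : ∀ (n) (X : Vec) (α : Form (n + 1)), ι _ X (-α) = - ι _ X α)
    (ι_ι : ∀ (n) (X Y : Vec) (α : Form (n + 2)), ι _ X (ι _ Y α) = - ι _ Y (ι _ X α))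
    (cartan : ∀ (n) (X : Vec) (α : Form (n + 1)), lie _ X α = d _ (ι _ X α) + ι _ X (d _ α))
    (lie_d : ∀ (n) (X : Vec) (α : Form n), lie _ X (d _ α) = d _ (lie _ X α))
    (ι_lie : ∀ (n) (X Y : Vec) (α : Form (n + 1)),
      ι _ ⁅X, Y⁆ α = lie _ X (ι _ Y α) - ι _ Y (lie _ X α))
    -- the 2-plectic structure: a closed nondegenerate 3-form
    (ϖ : Form 3) (hclosed : d _ ϖ = 0)
    (hnondeg : ∀ X : Vec, ι _ X ϖ = 0 → X = 0)
    -- Hamiltonian 1-forms α₁, α₂, α₃ with Hamiltonian vector fields X₁, X₂, X₃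
    (α₁ α₂ α₃ : Form 1) (X₁ X₂ X₃ : Vec)
    (h₁ : d _ α₁ = - ι _ X₁ ϖ) (h₂ : d _ α₂ = - ι _ X₂ ϖ) (h₃ : d _ α₃ = - ι _ X₃ ϖ)
    -- μ₂(αᵢ,αⱼ) = -ι_{Xᵢ}ι_{Xⱼ}ϖ is Hamiltonian with Hamiltonian vector field ⁅Xᵢ,Xⱼ⁆
    (h₁₂ : d _ (- ι _ X₁ (ι _ X₂ ϖ)) = - ι _ ⁅X₁, X₂⁆ ϖ)
    (h₃₁ : d _ (- ι _ X₃ (ι _ X₁ ϖ)) = - ι _ ⁅X₃, X₁⁆ ϖ)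
    (h₂₃ : d _ (- ι _ X₂ (ι _ X₃ ϖ)) = - ι _ ⁅X₂, X₃⁆ ϖ) :
    -- the Jacobiator of μ₂ is the exact term -d(ι_{X₁}ι_{X₂}ι_{X₃}ϖ)
    (- ι _ ⁅X₁, X₂⁆ (ι _ X₃ ϖ)) + (- ι _ ⁅X₃, X₁⁆ (ι _ X₂ ϖ))
      + (- ι _ ⁅X₂, X₃⁆ (ι _ X₁ ϖ))
      = - d _ (ι _ X₁ (ι _ X₂ (ι _ X₃ ϖ))) := by

  -- torsion-freeness helper: x = -x → x = 0
  have self_neg : ∀ {n : ℕ} {x : Form n}, x = -x → x = 0 := by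
    intro n x h
    have h2 : (2 : ℝ) • x = 0 := by
      rw [two_smul]
      nth_rewrite 2 [h]
      abel
    rcases smul_eq_zero.mp h2 with h' | h'
    · norm_num at h'
    · exact h'
  have hι0 : ∀ (n : ℕ) (X : Vec), ι n X 0 = 0 := fun n X =>
    self_neg (by simpa using ι_neg n X 0)
  -- d(ι X₃ ϖ) = 0
  have hιX3 : ι _ X₃ ϖ = - d _ α₃ := by rw [h₃, neg_neg]
  have hdι3 : d _ (ι _ X₃ ϖ) = 0 := by rw [hιX3, d_neg, d_d, neg_zero]
  -- lie X₁ (ι X₃ ϖ) = d (ι X₁ ι X₃ ϖ)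
  have hlie13 : lie _ X₁ (ι _ X₃ ϖ) = d _ (ι _ X₁ (ι _ X₃ ϖ)) := by
    rw [cartan, hdι3, hι0, add_zero]
  -- d(ι X₂ ι X₃ ϖ) = ι ⁅X₂,X₃⁆ ϖ
  have hdω23 : d _ (ι _ X₂ (ι _ X₃ ϖ)) = ι _ ⁅X₂, X₃⁆ ϖ := by
    have h := h₂₃
    rw [d_neg] at h
    exact neg_injective h
  -- d(ι X₃ ι X₁ ϖ) = ι ⁅X₃,X₁⁆ ϖ
  have hdω31 : d _ (ι _ X₃ (ι _ X₁ ϖ)) = ι _ ⁅X₃, X₁⁆ ϖ := by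
    have h := h₃₁
    rw [d_neg] at h
    exact neg_injective h
  -- d(ι X₁ ι X₃ ϖ) = - ι ⁅X₃,X₁⁆ ϖ
  have hdω13 : d _ (ι _ X₁ (ι _ X₃ ϖ)) = - ι _ ⁅X₃, X₁⁆ ϖ := by
    rw [ι_ι, d_neg, hdω31]
  -- expand the first Jacobiator term
  have e1 : ι _ ⁅X₁, X₂⁆ (ι _ X₃ ϖ)
      = d _ (ι _ X₁ (ι _ X₂ (ι _ X₃ ϖ)))
        + (- ι _ ⁅X₂, X₃⁆ (ι _ X₁ ϖ))
        - ι _ ⁅X₃, X₁⁆ (ι _ X₂ ϖ) := by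
    rw [ι_lie, cartan, hdω23, hlie13, hdω13, ι_neg, ι_ι,
        ι_ι 1 X₁ ⁅X₂, X₃⁆ ϖ, ι_ι 1 X₂ ⁅X₃, X₁⁆ ϖ]
    abel
  rw [e1]
  abel
end
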